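/- arXiv:2404.08864 — 3 statements merged into one kernel-verified Lean document; each statement's English description precedes it below -/
import Mathlib

section
/- Let H : ℝ⁴ → ℝ be C², let U ⊆ ℝ⁴ be open with |∇H(p)| = 1 for every p ∈ U, and set Xᵢ(p) = Aᵢ∇H(p) for i = 1,2,3. Let x : ℝ → U solve ẋ(t) = A₃∇H(x(t)) and let y : ℝ → ℝ⁴ solve the linearized equation ẏ(t) = A₃·Hess H(x(t))·y(t) with ⟨y(0), ∇H(x(0))⟩ = 0. Write aᵢ(t) = ⟨y(t), Xᵢ(x(t))⟩ and κᵢⱼ(t) = ⟨Hess H(x(t))·Xᵢ(x(t)), Xⱼ(x(t))⟩. Then a₁, a₂ satisfy ȧ₁(t) = −κ₁₂(t) a₁(t) − (κ₂₂(t)+κ₃₃(t)) a₂(t) and ȧ₂(t) = (κ₁₁(t)+κ₃₃(t)) a₁(t) + κ₁₂(t) a₂(t) for all t; equivalently (ȧ₁,ȧ₂)ᵀ = −𝕁M(a₁,a₂)ᵀ where M is the symmetric matrix with rows (κ₁₁+κ₃₃, κ₁₂) and (κ₁₂, κ₂₂+κ₃₃). -/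
/-!
Differentiating `aᵢ = ⟨y, Aᵢ∇H(x)⟩` along the flow and moving the skew matrices `Aᵢ` and the
symmetric Hessian across the inner product gives `ȧᵢ = ⟨y, Aᵢ Hess X₃ − Hess A₃Xᵢ⟩`.
Two facts make the right-hand side computable: `|∇H| = 1` forces `Hess·∇H = 0`, and
`⟨y, ∇H(x)⟩` is a first integral of the linearized flow, so it vanishes identically. Hence
`y = a₁X₁ + a₂X₂ + a₃X₃` in the orthonormal frame `(∇H, X₁, X₂, X₃)`, and the quaternion relations
`A₁A₂ = A₃, A₂A₃ = A₁, A₃A₁ = A₂` turn each coefficient into a `κᵢⱼ`; the `a₃` terms cancel by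
symmetry of the Hessian. In the code the indices of `A`, `a`, `κ` start at `0`.
-/

open Matrix

noncomputable section

/-- The quaternionic matrices A₁ = [[0,𝕁],[𝕁,0]], A₂ = [[𝕁,0],[0,−𝕁]], A₃ = [[0,I],[−I,0]],
where 𝕁 = [[0,1],[−1,0]]. -/
def A : Fin 3 → Matrix (Fin 4) (Fin 4) ℝ :=
  ![!![0,0,0,1; 0,0,-1,0; 0,1,0,0; -1,0,0,0],
    !![0,1,0,0; -1,0,0,0; 0,0,0,-1; 0,0,1,0],
    !![0,0,1,0; 0,0,0,1; -1,0,0,0; 0,-1,0,0]]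

/-- The gradient of `H : ℝ⁴ → ℝ` as the vector of partial derivatives. -/
def grad (H : (Fin 4 → ℝ) → ℝ) (p : Fin 4 → ℝ) : Fin 4 → ℝ :=
  fun i => fderiv ℝ H p (Pi.single i 1)

/-- The Hessian matrix of `H : ℝ⁴ → ℝ`. -/
def hess (H : (Fin 4 → ℝ) → ℝ) (p : Fin 4 → ℝ) : Matrix (Fin 4) (Fin 4) ℝ :=
  Matrix.of fun i j => fderiv ℝ (fun q => fderiv ℝ H q (Pi.single j 1)) p (Pi.single i 1)

namespace Matrix

variable {n : Type*} [Fintype n]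

lemma IsSymm.mulVec_dotProduct_comm {S : Matrix n n ℝ} (hS : S.IsSymm) (u v : n → ℝ) :
    S *ᵥ u ⬝ᵥ v = S *ᵥ v ⬝ᵥ u := by
  rw [dotProduct_comm, dotProduct_mulVec, ← mulVec_transpose, hS.eq]

lemma mulVec_dotProduct_of_transpose_eq_neg {B : Matrix n n ℝ} (hB : Bᵀ = -B) (u v : n → ℝ) :
    B *ᵥ u ⬝ᵥ v = -(u ⬝ᵥ B *ᵥ v) := by
  rw [dotProduct_mulVec, ← mulVec_transpose, hB, neg_mulVec, neg_dotProduct, neg_neg]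

lemma mul_mulVec_dotProduct_of_transpose_eq_neg {B S : Matrix n n ℝ} (hB : Bᵀ = -B)
    (hS : S.IsSymm) (u v : n → ℝ) : (B * S) *ᵥ u ⬝ᵥ v = -(u ⬝ᵥ S *ᵥ B *ᵥ v) := by
  rw [← mulVec_mulVec, mulVec_dotProduct_of_transpose_eq_neg hB, hS.mulVec_dotProduct_comm,
    dotProduct_comm]

end Matrix

section Calculus

variable {m n : Type*} [Fintype n] {u v : ℝ → n → ℝ} {u' v' : n → ℝ} {t : ℝ}

lemma HasDerivAt.dotProduct (hu : HasDerivAt u u' t) (hv : HasDerivAt v v' t) :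
    HasDerivAt (fun s => u s ⬝ᵥ v s) (u' ⬝ᵥ v t + u t ⬝ᵥ v') t := by
  simpa only [_root_.dotProduct, ← Finset.sum_add_distrib] using
    HasDerivAt.fun_sum (u := Finset.univ) fun i _ =>
      (hasDerivAt_pi.1 hu i).fun_mul (hasDerivAt_pi.1 hv i)

lemma HasDerivAt.mulVec_const (M : Matrix m n ℝ) (hv : HasDerivAt v v' t) :
    HasDerivAt (fun s => M *ᵥ v s) (M *ᵥ v') t :=
  hasDerivAt_pi.2 fun i => by
    simpa [mulVec] using (hasDerivAt_const t (M i)).dotProduct hv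

end Calculus

lemma A_transpose (i : Fin 3) : (A i)ᵀ = -A i := by
  fin_cases i <;> ext j k <;> fin_cases j <;> fin_cases k <;> simp [A]

lemma A_mul_A_self (i : Fin 3) : A i * A i = -1 := by
  fin_cases i <;> ext j k <;> fin_cases j <;> fin_cases k <;>
    simp [A, mul_apply, Fin.sum_univ_four]

lemma A_zero_mul_A_one : A 0 * A 1 = A 2 := by
  ext j k; fin_cases j <;> fin_cases k <;> simp [A, mul_apply, Fin.sum_univ_four]

lemma A_one_mul_A_zero : A 1 * A 0 = -A 2 := by
  ext j k; fin_cases j <;> fin_cases k <;> simp [A, mul_apply, Fin.sum_univ_four]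

lemma A_one_mul_A_two : A 1 * A 2 = A 0 := by
  ext j k; fin_cases j <;> fin_cases k <;> simp [A, mul_apply, Fin.sum_univ_four]

lemma A_two_mul_A_one : A 2 * A 1 = -A 0 := by
  ext j k; fin_cases j <;> fin_cases k <;> simp [A, mul_apply, Fin.sum_univ_four]

lemma A_two_mul_A_zero : A 2 * A 0 = A 1 := by
  ext j k; fin_cases j <;> fin_cases k <;> simp [A, mul_apply, Fin.sum_univ_four]

lemma A_zero_mul_A_two : A 0 * A 2 = -A 1 := by
  ext j k; fin_cases j <;> fin_cases k <;> simp [A, mul_apply, Fin.sum_univ_four]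

lemma A_mulVec_dotProduct (i : Fin 3) (u v : Fin 4 → ℝ) : A i *ᵥ u ⬝ᵥ v = -(u ⬝ᵥ A i *ᵥ v) :=
  mulVec_dotProduct_of_transpose_eq_neg (A_transpose i) u v

lemma dotProduct_eq_sum_frame {g Y : Fin 4 → ℝ} (hg : g ⬝ᵥ g = 1) (hY : Y ⬝ᵥ g = 0)
    (v : Fin 4 → ℝ) : Y ⬝ᵥ v = ∑ i, (Y ⬝ᵥ A i *ᵥ g) * (v ⬝ᵥ A i *ᵥ g) := by
  simp only [Fin.sum_univ_three, Fin.sum_univ_four, A, dotProduct, mulVec, of_apply, cons_val',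
    cons_val_zero, cons_val_one, cons_val, cons_val_fin_one] at hg hY ⊢
  linear_combination -(Y 0 * v 0 + Y 1 * v 1 + Y 2 * v 2 + Y 3 * v 3) * hg
    + (v 0 * g 0 + v 1 * g 1 + v 2 * g 2 + v 3 * g 3) * hY

section

variable {S : Matrix (Fin 4) (Fin 4) ℝ} {g Y : Fin 4 → ℝ}

lemma transverse_deriv_zero (hS : S.IsSymm) (hSg : S *ᵥ g = 0) (hg : g ⬝ᵥ g = 1)
    (hY : Y ⬝ᵥ g = 0) :
    (A 2 * S) *ᵥ Y ⬝ᵥ A 0 *ᵥ g + Y ⬝ᵥ A 0 *ᵥ S *ᵥ A 2 *ᵥ g =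
      -(S *ᵥ A 0 *ᵥ g ⬝ᵥ A 1 *ᵥ g) * (Y ⬝ᵥ A 0 *ᵥ g)
        - (S *ᵥ A 1 *ᵥ g ⬝ᵥ A 1 *ᵥ g + S *ᵥ A 2 *ᵥ g ⬝ᵥ A 2 *ᵥ g) * (Y ⬝ᵥ A 1 *ᵥ g) := by
  have hSg' : S *ᵥ A 2 *ᵥ g ⬝ᵥ g = 0 := by rw [hS.mulVec_dotProduct_comm, hSg, zero_dotProduct]
  have e20 : A 2 *ᵥ A 0 *ᵥ g = A 1 *ᵥ g := by rw [mulVec_mulVec, A_two_mul_A_zero]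
  have e00 : A 0 *ᵥ A 0 *ᵥ g = -g := by rw [mulVec_mulVec, A_mul_A_self, neg_mulVec, one_mulVec]
  have e01 : A 0 *ᵥ A 1 *ᵥ g = A 2 *ᵥ g := by rw [mulVec_mulVec, A_zero_mul_A_one]
  have e02 : A 0 *ᵥ A 2 *ᵥ g = -(A 1 *ᵥ g) := by rw [mulVec_mulVec, A_zero_mul_A_two, neg_mulVec]
  rw [mul_mulVec_dotProduct_of_transpose_eq_neg (A_transpose 2) hS, e20, ← dotProduct_neg,
    ← dotProduct_add, dotProduct_eq_sum_frame hg hY]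
  simp only [Fin.sum_univ_three, add_dotProduct, neg_dotProduct, A_mulVec_dotProduct, e00, e01,
    e02, dotProduct_neg, hSg']
  rw [hS.mulVec_dotProduct_comm (A 1 *ᵥ g) (A 0 *ᵥ g),
    hS.mulVec_dotProduct_comm (A 1 *ᵥ g) (A 2 *ᵥ g)]
  ring

lemma transverse_deriv_one (hS : S.IsSymm) (hSg : S *ᵥ g = 0) (hg : g ⬝ᵥ g = 1)
    (hY : Y ⬝ᵥ g = 0) :
    (A 2 * S) *ᵥ Y ⬝ᵥ A 1 *ᵥ g + Y ⬝ᵥ A 1 *ᵥ S *ᵥ A 2 *ᵥ g =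
      (S *ᵥ A 0 *ᵥ g ⬝ᵥ A 0 *ᵥ g + S *ᵥ A 2 *ᵥ g ⬝ᵥ A 2 *ᵥ g) * (Y ⬝ᵥ A 0 *ᵥ g)
        + (S *ᵥ A 0 *ᵥ g ⬝ᵥ A 1 *ᵥ g) * (Y ⬝ᵥ A 1 *ᵥ g) := by
  have hSg' : S *ᵥ A 2 *ᵥ g ⬝ᵥ g = 0 := by rw [hS.mulVec_dotProduct_comm, hSg, zero_dotProduct]
  have e21 : A 2 *ᵥ A 1 *ᵥ g = -(A 0 *ᵥ g) := by rw [mulVec_mulVec, A_two_mul_A_one, neg_mulVec]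
  have e10 : A 1 *ᵥ A 0 *ᵥ g = -(A 2 *ᵥ g) := by rw [mulVec_mulVec, A_one_mul_A_zero, neg_mulVec]
  have e11 : A 1 *ᵥ A 1 *ᵥ g = -g := by rw [mulVec_mulVec, A_mul_A_self, neg_mulVec, one_mulVec]
  have e12 : A 1 *ᵥ A 2 *ᵥ g = A 0 *ᵥ g := by rw [mulVec_mulVec, A_one_mul_A_two]
  rw [mul_mulVec_dotProduct_of_transpose_eq_neg (A_transpose 2) hS, e21, mulVec_neg,
    dotProduct_neg, neg_neg, ← dotProduct_add, dotProduct_eq_sum_frame hg hY]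
  simp only [Fin.sum_univ_three, add_dotProduct, A_mulVec_dotProduct, e10, e11, e12,
    dotProduct_neg, hSg']
  rw [hS.mulVec_dotProduct_comm (A 2 *ᵥ g) (A 0 *ᵥ g)]
  ring

end


section Hessian

variable {H : (Fin 4 → ℝ) → ℝ} {p : Fin 4 → ℝ}

lemma hess_apply (hH : DifferentiableAt ℝ (fderiv ℝ H) p) (i j : Fin 4) :
    hess H p i j = fderiv ℝ (fderiv ℝ H) p (Pi.single i 1) (Pi.single j 1) := by
  rw [hess, Matrix.of_apply, fderiv_clm_apply hH (differentiableAt_const _)]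
  simp

lemma hess_isSymm (hH : ContDiff ℝ 2 H) (p : Fin 4 → ℝ) : (hess H p).IsSymm := by
  have hD : DifferentiableAt ℝ (fderiv ℝ H) p :=
    (hH.fderiv_right (m := 1) le_rfl).differentiable one_ne_zero p
  refine Matrix.IsSymm.ext fun i j => ?_
  rw [hess_apply hD, hess_apply hD]
  exact hH.contDiffAt.isSymmSndFDerivAt (by simp) _ _

lemma ContDiff.hasDerivAt_grad_comp (hH : ContDiff ℝ 2 H) {x : ℝ → Fin 4 → ℝ}
    {v : Fin 4 → ℝ} {t : ℝ} (hx : HasDerivAt x v t) :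
    HasDerivAt (fun s => grad H (x s)) (hess H (x t) *ᵥ v) t := by
  have hD : DifferentiableAt ℝ (fderiv ℝ H) (x t) :=
    (hH.fderiv_right (m := 1) le_rfl).differentiable one_ne_zero (x t)
  refine hasDerivAt_pi.2 fun k => ?_
  convert (hD.hasFDerivAt.comp_hasDerivAt t hx).clm_apply (hasDerivAt_const t (Pi.single k 1))
    using 1
  · rfl
  have hsymm := hH.contDiffAt.isSymmSndFDerivAt (x := x t) (by simp)
  conv_rhs => rw [hsymm, ← Finset.univ_sum_single v, map_sum]
  simp only [mulVec, dotProduct, hess_apply hD, map_zero, add_zero]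
  refine Finset.sum_congr rfl fun j _ => ?_
  have hj : (Pi.single j (v j) : Fin 4 → ℝ) = v j • Pi.single j 1 := by
    rw [← Pi.single_smul', smul_eq_mul, mul_one]
  rw [hj, map_smul, smul_eq_mul, mul_comm]

lemma hess_mulVec_grad_eq_zero (hH : ContDiff ℝ 2 H) {U : Set (Fin 4 → ℝ)} (hU : IsOpen U)
    (hgrad : ∀ q ∈ U, grad H q ⬝ᵥ grad H q = 1) (hp : p ∈ U) : hess H p *ᵥ grad H p = 0 := by
  -- Differentiate `|∇H|² ≡ 1` along the line through `p` in the direction `w`: `2 |w|² = 0`.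
  set w := hess H p *ᵥ grad H p
  have hline : HasDerivAt (fun s : ℝ => p + s • w) w 0 := by
    simpa using ((hasDerivAt_id (0 : ℝ)).smul_const w).const_add p
  have hderiv := (hH.hasDerivAt_grad_comp hline).dotProduct (hH.hasDerivAt_grad_comp hline)
  simp only [zero_smul, add_zero] at hderiv
  have hconst : (fun s : ℝ => grad H (p + s • w) ⬝ᵥ grad H (p + s • w)) =ᶠ[nhds 0] fun _ => 1 := by
    have hcont : Continuous fun s : ℝ => p + s • w := by fun_prop
    filter_upwards [hcont.continuousAt.preimage_mem_nhds (by simpa using hU.mem_nhds hp)]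
      with s hs using hgrad _ hs
  have hzero := hderiv.unique ((hasDerivAt_const (0 : ℝ) (1 : ℝ)).congr_of_eventuallyEq hconst)
  rw [dotProduct_comm (grad H p), (hess_isSymm hH p).mulVec_dotProduct_comm, ← two_mul] at hzero
  exact dotProduct_self_eq_zero.1 ((mul_eq_zero.1 hzero).resolve_left two_ne_zero)

end Hessian

lemma dotProduct_linearized_grad_eq {J : Matrix (Fin 4) (Fin 4) ℝ} (hJ : Jᵀ = -J)
    {H : (Fin 4 → ℝ) → ℝ} (hH : ContDiff ℝ 2 H) {x y : ℝ → Fin 4 → ℝ}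
    (hx : ∀ t, HasDerivAt x (J *ᵥ grad H (x t)) t)
    (hy : ∀ t, HasDerivAt y ((J * hess H (x t)) *ᵥ y t) t) (t : ℝ) :
    y t ⬝ᵥ grad H (x t) = y 0 ⬝ᵥ grad H (x 0) := by
  have hderiv : ∀ s, HasDerivAt (fun r => y r ⬝ᵥ grad H (x r)) 0 s := fun s => by
    convert (hy s).dotProduct (hH.hasDerivAt_grad_comp (hx s)) using 1
    rw [mul_mulVec_dotProduct_of_transpose_eq_neg hJ (hess_isSymm hH (x s)), neg_add_cancel]
  exact is_const_of_deriv_eq_zero (fun s => (hderiv s).differentiableAt)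
    (fun s => (hderiv s).deriv) t 0

/-- Along a Hamiltonian trajectory `x` in the unit-gradient region, a solution `y` of the
linearized flow, tangent to the energy level, has transverse components
`aᵢ = ⟨y, Aᵢ∇H(x)⟩` satisfying `(ȧ₁,ȧ₂)ᵀ = −𝕁 M (a₁,a₂)ᵀ`. -/
theorem stmt_0
    (H : (Fin 4 → ℝ) → ℝ) (hH : ContDiff ℝ 2 H)
    (U : Set (Fin 4 → ℝ)) (hU : IsOpen U)
    (hgrad : ∀ p ∈ U, dotProduct (grad H p) (grad H p) = 1)
    (x : ℝ → Fin 4 → ℝ) (hxU : ∀ t, x t ∈ U)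
    (hx : ∀ t, HasDerivAt x ((A 2).mulVec (grad H (x t))) t)
    (y : ℝ → Fin 4 → ℝ)
    (hy : ∀ t, HasDerivAt y ((A 2 * hess H (x t)).mulVec (y t)) t)
    (hy0 : dotProduct (y 0) (grad H (x 0)) = 0)
    (a : Fin 3 → ℝ → ℝ)
    (ha : ∀ i t, a i t = dotProduct (y t) ((A i).mulVec (grad H (x t))))
    (κ : Fin 3 → Fin 3 → ℝ → ℝ)
    (hκ : ∀ i j t, κ i j t =
      dotProduct ((hess H (x t)).mulVec ((A i).mulVec (grad H (x t))))
        ((A j).mulVec (grad H (x t)))) :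
    ∀ t : ℝ,
      HasDerivAt (a 0) (-(κ 0 1 t) * a 0 t - (κ 1 1 t + κ 2 2 t) * a 1 t) t ∧
      HasDerivAt (a 1) ((κ 0 0 t + κ 2 2 t) * a 0 t + κ 0 1 t * a 1 t) t := by
  intro t
  have hS := hess_isSymm hH (x t)
  have hSg := hess_mulVec_grad_eq_zero hH hU hgrad (hxU t)
  have hg := hgrad (x t) (hxU t)
  have hyg : y t ⬝ᵥ grad H (x t) = 0 :=
    (dotProduct_linearized_grad_eq (A_transpose 2) hH hx hy t).trans hy0
  have ha' : ∀ i, HasDerivAt (a i) ((A 2 * hess H (x t)) *ᵥ y t ⬝ᵥ A i *ᵥ grad H (x t)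
      + y t ⬝ᵥ A i *ᵥ hess H (x t) *ᵥ A 2 *ᵥ grad H (x t)) t := fun i => by
    rw [show a i = _ from funext (ha i)]
    exact (hy t).dotProduct ((hH.hasDerivAt_grad_comp (hx t)).mulVec_const (A i))
  simp only [hκ, ha]
  exact ⟨(ha' 0).congr_deriv (transverse_deriv_zero hS hSg hg hyg),
    (ha' 1).congr_deriv (transverse_deriv_one hS hSg hg hyg)⟩
end
end

section
/- Let S : ℝ → M₂(ℝ) be a smooth 1-periodic loop of symmetric matrices and ν ∈ ℝ. Let ζ₁, ζ₂ : ℝ → ℝ² be two smooth, 1-periodic, nowhere-vanishing solutions of −J₀ζ' − Sζ = νζ, and let Θ₁, Θ₂ : ℝ → ℝ be continuous arguments, i.e. ζᵢ(t) = |ζᵢ(t)|(cos Θᵢ(t), sin Θᵢ(t)) for all t. Then Θ₁(1) − Θ₁(0) = Θ₂(1) − Θ₂(0); that is, the winding number of a ν-eigenfunction of 𝓛_S does not depend on the choice of eigenfunction. -/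
attribute [local instance] Matrix.normedAddCommGroup Matrix.normedSpace

open Matrix Real

def J₀ : Matrix (Fin 2) (Fin 2) ℝ := !![0, -1; 1, 0]

lemma aux_cos_sin_eq {x y : ℝ} (hc : Real.cos x = Real.cos y) (hs : Real.sin x = Real.sin y) :
    ∃ n : ℤ, x = y + n * (2 * π) := by
  have h : Complex.exp (x * Complex.I) = Complex.exp (y * Complex.I) := by
    rw [Complex.exp_mul_I, Complex.exp_mul_I, ← Complex.ofReal_cos, ← Complex.ofReal_cos,
      ← Complex.ofReal_sin, ← Complex.ofReal_sin, hc, hs]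
  rw [Complex.exp_eq_exp_iff_exists_int] at h
  obtain ⟨n, hn⟩ := h
  refine ⟨n, ?_⟩
  have h2 : ((x : ℝ) : ℂ) * Complex.I = ((y + n * (2 * π) : ℝ) : ℂ) * Complex.I := by
    push_cast
    rw [hn]; ring
  have h3 := mul_right_cancel₀ Complex.I_ne_zero h2
  exact_mod_cast h3

/-- If the angle function never hits a multiple of π on [0,1] it can't increase by π. -/
lemma aux_no_winding {φ : ℝ → ℝ} (hφ : Continuous φ)
    (h : ∀ t, Real.sin (φ t) ≠ 0) (hle : φ 0 + π ≤ φ 1) : False := by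
  have hπ := Real.pi_pos
  set k : ℤ := ⌊φ 0 / π⌋ + 1 with hk
  have h1 : φ 0 ≤ (k : ℝ) * π := by
    have h' := (Int.lt_floor_add_one (φ 0 / π)).le
    have : φ 0 / π ≤ (k : ℝ) := by rw [hk]; push_cast; linarith
    calc φ 0 = (φ 0 / π) * π := by field_simp
    _ ≤ (k : ℝ) * π := mul_le_mul_of_nonneg_right this hπ.le
  have h2 : (k : ℝ) * π ≤ φ 1 := by
    have h' := Int.floor_le (φ 0 / π)
    have hk2 : (k : ℝ) ≤ φ 0 / π + 1 := by rw [hk]; push_cast; linarith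
    have h3 : (k : ℝ) * π ≤ (φ 0 / π + 1) * π := mul_le_mul_of_nonneg_right hk2 hπ.le
    have h4 : (φ 0 / π + 1) * π = φ 0 + π := by field_simp
    linarith
  obtain ⟨t, _, hφt⟩ := intermediate_value_Icc (by norm_num : (0:ℝ) ≤ 1)
    hφ.continuousOn ⟨h1, h2⟩
  exact h t (by rw [hφt]; exact Real.sin_int_mul_pi k)

/-- If the angle function only takes values in πℤ on [0,1], it can't increase. -/
lemma aux_not_lt {φ : ℝ → ℝ} (hφ : Continuous φ)
    (h : ∀ t, Real.sin (φ t) = 0) : ¬ (φ 0 < φ 1) := by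
  intro hlt
  have hπ := Real.pi_pos
  obtain ⟨k₀, hk₀⟩ := Real.sin_eq_zero_iff.mp (h 0)
  obtain ⟨k₁, hk₁⟩ := Real.sin_eq_zero_iff.mp (h 1)
  have hkk : k₀ < k₁ := by
    by_contra hc
    push_neg at hc
    have : (k₁ : ℝ) * π ≤ (k₀ : ℝ) * π := by
      apply mul_le_mul_of_nonneg_right _ hπ.le
      exact_mod_cast hc
    linarith [hk₀, hk₁]
  have hk1 : (k₀ : ℝ) + 1 ≤ (k₁ : ℝ) := by exact_mod_cast hkk
  have h1 : φ 0 ≤ (k₀ : ℝ) * π + π / 2 := by nlinarith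
  have h2 : (k₀ : ℝ) * π + π / 2 ≤ φ 1 := by nlinarith
  obtain ⟨t, _, hφt⟩ := intermediate_value_Icc (by norm_num : (0:ℝ) ≤ 1)
    hφ.continuousOn ⟨h1, h2⟩
  have hs := h t
  rw [hφt, Real.sin_add, Real.sin_int_mul_pi, Real.sin_pi_div_two, Real.cos_pi_div_two] at hs
  -- hs : 0 * 0 + cos (k₀ * π) * 1 = 0
  have hcsq : Real.cos ((k₀ : ℝ) * π) ^ 2 = 1 := by
    have := Real.sin_sq_add_cos_sq ((k₀ : ℝ) * π)
    rw [Real.sin_int_mul_pi] at this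
    nlinarith
  nlinarith [hs]

lemma aux_const_of_sin_zero {φ : ℝ → ℝ} (hφ : Continuous φ)
    (h : ∀ t, Real.sin (φ t) = 0) : φ 1 = φ 0 := by
  have h1 := aux_not_lt hφ h
  have h2 := aux_not_lt (φ := fun t => -φ t) (hφ.neg) (fun t => by simp [h t])
  simp only [neg_lt_neg_iff] at h2
  have := lt_trichotomy (φ 0) (φ 1)
  tauto

/-- Let `S` be a smooth 1-periodic loop of symmetric matrices and `ν ∈ ℝ`. If `ζ₁, ζ₂` are
smooth 1-periodic nowhere-vanishing solutions of `−J₀ζ' − Sζ = νζ` with continuous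
arguments `Θ₁, Θ₂` (i.e. `ζᵢ(t) = |ζᵢ(t)|(cos Θᵢ(t), sin Θᵢ(t))`), then
`Θ₁(1) − Θ₁(0) = Θ₂(1) − Θ₂(0)`: the winding number of a `ν`-eigenfunction of `𝓛_S`
does not depend on the eigenfunction. -/
theorem stmt_11 (S : ℝ → Matrix (Fin 2) (Fin 2) ℝ) (hS : ContDiff ℝ (⊤ : ℕ∞) S)
    (hsym : ∀ t : ℝ, (S t)ᵀ = S t) (hper : ∀ t : ℝ, S (t + 1) = S t) (ν : ℝ)
    (ζ₁ ζ₂ : ℝ → Fin 2 → ℝ) (h₁ : ContDiff ℝ (⊤ : ℕ∞) ζ₁) (h₂ : ContDiff ℝ (⊤ : ℕ∞) ζ₂)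
    (hp₁ : ∀ t : ℝ, ζ₁ (t + 1) = ζ₁ t) (hp₂ : ∀ t : ℝ, ζ₂ (t + 1) = ζ₂ t)
    (hnv₁ : ∀ t : ℝ, ζ₁ t ≠ 0) (hnv₂ : ∀ t : ℝ, ζ₂ t ≠ 0)
    (he₁ : ∀ t : ℝ, -(J₀.mulVec (deriv ζ₁ t)) - (S t).mulVec (ζ₁ t) = ν • ζ₁ t)
    (he₂ : ∀ t : ℝ, -(J₀.mulVec (deriv ζ₂ t)) - (S t).mulVec (ζ₂ t) = ν • ζ₂ t)
    (Θ₁ Θ₂ : ℝ → ℝ) (hΘ₁ : Continuous Θ₁) (hΘ₂ : Continuous Θ₂)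
    (harg₁ : ∀ t : ℝ, ζ₁ t =
      Real.sqrt ((ζ₁ t 0) ^ 2 + (ζ₁ t 1) ^ 2) • ![Real.cos (Θ₁ t), Real.sin (Θ₁ t)])
    (harg₂ : ∀ t : ℝ, ζ₂ t =
      Real.sqrt ((ζ₂ t 0) ^ 2 + (ζ₂ t 1) ^ 2) • ![Real.cos (Θ₂ t), Real.sin (Θ₂ t)]) :
    Θ₁ 1 - Θ₁ 0 = Θ₂ 1 - Θ₂ 0 := by
  have hπ := Real.pi_pos
  -- radii
  set r₁ : ℝ → ℝ := fun t => Real.sqrt ((ζ₁ t 0) ^ 2 + (ζ₁ t 1) ^ 2) with hr₁def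
  set r₂ : ℝ → ℝ := fun t => Real.sqrt ((ζ₂ t 0) ^ 2 + (ζ₂ t 1) ^ 2) with hr₂def
  have hrpos : ∀ (ζ : ℝ → Fin 2 → ℝ) (hnv : ∀ t, ζ t ≠ 0) (t : ℝ),
      0 < Real.sqrt ((ζ t 0) ^ 2 + (ζ t 1) ^ 2) := by
    intro ζ hnv t
    apply Real.sqrt_pos.mpr
    by_contra hc
    push_neg at hc
    have h00 : ζ t 0 = 0 := by
      have : ζ t 0 ^ 2 = 0 := le_antisymm (by nlinarith [sq_nonneg (ζ t 1)]) (sq_nonneg _)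
      exact pow_eq_zero_iff two_ne_zero |>.mp this
    have h11 : ζ t 1 = 0 := by
      have : ζ t 1 ^ 2 = 0 := le_antisymm (by nlinarith [sq_nonneg (ζ t 0)]) (sq_nonneg _)
      exact pow_eq_zero_iff two_ne_zero |>.mp this
    apply hnv t
    funext i
    fin_cases i <;> simp [h00, h11]
  have hr₁ : ∀ t, 0 < r₁ t := hrpos ζ₁ hnv₁
  have hr₂ : ∀ t, 0 < r₂ t := hrpos ζ₂ hnv₂
  -- components in polar form
  have hx₁ : ∀ t, ζ₁ t 0 = r₁ t * Real.cos (Θ₁ t) := fun t => by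
    have := congrFun (harg₁ t) 0; simpa [smul_eq_mul] using this
  have hy₁ : ∀ t, ζ₁ t 1 = r₁ t * Real.sin (Θ₁ t) := fun t => by
    have := congrFun (harg₁ t) 1; simpa [smul_eq_mul] using this
  have hx₂ : ∀ t, ζ₂ t 0 = r₂ t * Real.cos (Θ₂ t) := fun t => by
    have := congrFun (harg₂ t) 0; simpa [smul_eq_mul] using this
  have hy₂ : ∀ t, ζ₂ t 1 = r₂ t * Real.sin (Θ₂ t) := fun t => by
    have := congrFun (harg₂ t) 1; simpa [smul_eq_mul] using this
  -- periodicity gives angle increments in 2πℤ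
  have hz₁ : ζ₁ 1 = ζ₁ 0 := by simpa using hp₁ 0
  have hz₂ : ζ₂ 1 = ζ₂ 0 := by simpa using hp₂ 0
  have hre₁ : r₁ 1 = r₁ 0 := by simp only [hr₁def, hz₁]
  have hre₂ : r₂ 1 = r₂ 0 := by simp only [hr₂def, hz₂]
  have hcos₁ : Real.cos (Θ₁ 1) = Real.cos (Θ₁ 0) := by
    have e1 := hx₁ 1; have e0 := hx₁ 0
    rw [hz₁, e0, hre₁] at e1
    exact (mul_left_cancel₀ (hr₁ 0).ne' e1).symm
  have hsin₁ : Real.sin (Θ₁ 1) = Real.sin (Θ₁ 0) := by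
    have e1 := hy₁ 1; have e0 := hy₁ 0
    rw [hz₁, e0, hre₁] at e1
    exact (mul_left_cancel₀ (hr₁ 0).ne' e1).symm
  have hcos₂ : Real.cos (Θ₂ 1) = Real.cos (Θ₂ 0) := by
    have e1 := hx₂ 1; have e0 := hx₂ 0
    rw [hz₂, e0, hre₂] at e1
    exact (mul_left_cancel₀ (hr₂ 0).ne' e1).symm
  have hsin₂ : Real.sin (Θ₂ 1) = Real.sin (Θ₂ 0) := by
    have e1 := hy₂ 1; have e0 := hy₂ 0
    rw [hz₂, e0, hre₂] at e1
    exact (mul_left_cancel₀ (hr₂ 0).ne' e1).symm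
  obtain ⟨n₁, hn₁⟩ := aux_cos_sin_eq hcos₁ hsin₁
  obtain ⟨n₂, hn₂⟩ := aux_cos_sin_eq hcos₂ hsin₂
  -- derivative component equations
  have hS01 : ∀ t, S t 0 1 = S t 1 0 := fun t => by
    have := congrFun (congrFun (hsym t) 0) 1
    simpa [Matrix.transpose_apply] using this.symm
  have hda : ∀ t, deriv ζ₁ t 0 = -(S t 1 0 * ζ₁ t 0 + S t 1 1 * ζ₁ t 1) - ν * ζ₁ t 1 := by
    intro t
    have h := congrFun (he₁ t) 1
    simp [J₀, Matrix.mulVec, dotProduct, Fin.sum_univ_two] at h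
    linarith
  have hdb : ∀ t, deriv ζ₁ t 1 = S t 0 0 * ζ₁ t 0 + S t 0 1 * ζ₁ t 1 + ν * ζ₁ t 0 := by
    intro t
    have h := congrFun (he₁ t) 0
    simp [J₀, Matrix.mulVec, dotProduct, Fin.sum_univ_two] at h
    linarith
  have hdc : ∀ t, deriv ζ₂ t 0 = -(S t 1 0 * ζ₂ t 0 + S t 1 1 * ζ₂ t 1) - ν * ζ₂ t 1 := by
    intro t
    have h := congrFun (he₂ t) 1
    simp [J₀, Matrix.mulVec, dotProduct, Fin.sum_univ_two] at h
    linarith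
  have hdd : ∀ t, deriv ζ₂ t 1 = S t 0 0 * ζ₂ t 0 + S t 0 1 * ζ₂ t 1 + ν * ζ₂ t 0 := by
    intro t
    have h := congrFun (he₂ t) 0
    simp [J₀, Matrix.mulVec, dotProduct, Fin.sum_univ_two] at h
    linarith
  -- the symplectic form is constant
  have hD₁ : ∀ (t : ℝ) (j : Fin 2), HasDerivAt (fun s => ζ₁ s j) (deriv ζ₁ t j) t := fun t j =>
    hasDerivAt_pi.mp ((h₁.differentiable (by simp) t).hasDerivAt) j
  have hD₂ : ∀ (t : ℝ) (j : Fin 2), HasDerivAt (fun s => ζ₂ s j) (deriv ζ₂ t j) t := fun t j =>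
    hasDerivAt_pi.mp ((h₂.differentiable (by simp) t).hasDerivAt) j
  set f : ℝ → ℝ := fun t => ζ₁ t 0 * ζ₂ t 1 - ζ₁ t 1 * ζ₂ t 0 with hfdef
  have hf : ∀ t, HasDerivAt f 0 t := by
    intro t
    have h : HasDerivAt f
        (deriv ζ₁ t 0 * ζ₂ t 1 + ζ₁ t 0 * deriv ζ₂ t 1 -
          (deriv ζ₁ t 1 * ζ₂ t 0 + ζ₁ t 1 * deriv ζ₂ t 0)) t :=
      ((hD₁ t 0).mul (hD₂ t 1)).sub ((hD₁ t 1).mul (hD₂ t 0))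
    have e : deriv ζ₁ t 0 * ζ₂ t 1 + ζ₁ t 0 * deriv ζ₂ t 1 -
        (deriv ζ₁ t 1 * ζ₂ t 0 + ζ₁ t 1 * deriv ζ₂ t 0) = 0 := by
      rw [hda, hdb, hdc, hdd, hS01]; ring
    rwa [e] at h
  have hconst : ∀ t, f t = f 0 := fun t =>
    is_const_of_deriv_eq_zero (fun x => (hf x).differentiableAt) (fun x => (hf x).deriv) t 0
  have key : ∀ t, f t = r₁ t * r₂ t * Real.sin (Θ₂ t - Θ₁ t) := by
    intro t
    simp only [hfdef]
    rw [hx₁ t, hy₁ t, hx₂ t, hy₂ t, Real.sin_sub]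
    ring
  set φ : ℝ → ℝ := fun t => Θ₂ t - Θ₁ t with hφdef
  have hφc : Continuous φ := hΘ₂.sub hΘ₁
  suffices hgoal : φ 1 = φ 0 by
    simp only [hφdef] at hgoal; linarith
  by_cases hzero : f 0 = 0
  · -- sin φ ≡ 0
    have hsin0 : ∀ t, Real.sin (φ t) = 0 := by
      intro t
      have h := (hconst t).trans hzero
      rw [key t] at h
      have := mul_ne_zero (hr₁ t).ne' (hr₂ t).ne'
      simp only [hφdef]
      rcases mul_eq_zero.mp h with h' | h'
      · exact absurd h' this
      · exact h'
    exact aux_const_of_sin_zero hφc hsin0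
  · -- sin φ never 0
    have hsinne : ∀ t, Real.sin (φ t) ≠ 0 := by
      intro t hs
      apply hzero
      rw [← hconst t, key t]
      simp only [hφdef] at hs
      rw [hs, mul_zero]
    have hm : φ 1 = φ 0 + ((n₂ - n₁ : ℤ) : ℝ) * (2 * π) := by
      simp only [hφdef]; push_cast; linarith
    rcases lt_trichotomy (n₂ - n₁ : ℤ) 0 with hlt | heq | hgt
    · exfalso
      have h1' : (n₂ - n₁ : ℤ) ≤ -1 := by omega
      have h1 : ((n₂ - n₁ : ℤ) : ℝ) ≤ ((-1 : ℤ) : ℝ) := Int.cast_le.mpr h1'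
      push_cast at h1 hm
      refine aux_no_winding (φ := fun t => -φ t) hφc.neg (fun t => by simp [hsinne t]) ?_
      show -φ 0 + π ≤ -φ 1
      nlinarith [mul_le_mul_of_nonneg_right h1 (by linarith : (0:ℝ) ≤ 2 * π)]
    · rw [hm, heq]; simp
    · exfalso
      have h1 : (1:ℝ) ≤ ((n₂ - n₁ : ℤ) : ℝ) := by exact_mod_cast hgt
      push_cast at h1 hm
      refine aux_no_winding hφc hsinne ?_
      nlinarith [mul_le_mul_of_nonneg_right h1 (by linarith : (0:ℝ) ≤ 2 * π)]
end

section
/- Let H(z₁, z₂) = |z₁|² + |z₂|⁴ on ℂ². The circle P₁ = {(z₁, 0) : |z₁| = 1} is contained in H⁻¹(1) and is invariant under the flow of X_H, and every solution starting on P₁ is periodic with minimal period π. Moreover, for every solution x(t) = (z₁(t), z₂(t)) of ẋ = X_H(x) with H(x(0)) = 1 and z₂(0) ≠ 0, and for every t₀ ∈ ℝ, there exist times t⁺ > t₀ and t⁻ < t₀ with Im z₂(t^±) = 0 and Re z₂(t^±) > 0; that is, every trajectory in H⁻¹(1) off P₁ hits the interior of the disk Σ₁ = {(z₁,z₂) ∈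 H⁻¹(1) : Im z₂ = 0, Re z₂ ∈ [0,1]} in forward and in backward time. -/
open Complex

/-- A pair `(z₁, z₂)` solves the Hamiltonian equations of `H(z₁,z₂) = |z₁|² + |z₂|⁴`,
namely `X_H = (2y₁, −2x₁, 4|z₂|²y₂, −4|z₂|²x₂)`. -/
def IsHSol (z₁ z₂ : ℝ → ℂ) : Prop :=
  ∀ t : ℝ,
    HasDerivAt z₁ (Complex.ofReal (2 * (z₁ t).im) +
      Complex.ofReal (-2 * (z₁ t).re) * Complex.I) t ∧
    HasDerivAt z₂ (Complex.ofReal (4 * ‖z₂ t‖ ^ 2 * (z₂ t).im) +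
      Complex.ofReal (-4 * ‖z₂ t‖ ^ 2 * (z₂ t).re) * Complex.I) t

/-- The circle `P₁ = {(z₁, 0) : |z₁| = 1}`. -/
def P₁ : Set (ℂ × ℂ) := {p : ℂ × ℂ | ‖p.1‖ = 1 ∧ p.2 = 0}

/-!
Both equations are rotations `ż = i r(t) z` with real `r`, so `|z₁|` and `|z₂|` are first
integrals. Hence `z₁(t) = z₁(0) e^{-2it}` and `z₂(t) = z₂(0) e^{-4i|z₂(0)|²t}`: on `P₁` the
orbit is the circle traversed with period exactly `π`, and off `P₁` the component `z₂` is a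
nonconstant periodic rotation, which passes through the positive real `|z₂(0)|` once in every
period.
-/

open scoped Real

theorem eq_mul_exp_of_hasDerivAt {f : ℝ → ℂ} {c : ℂ} (hf : ∀ t, HasDerivAt f (c * f t) t)
    (t : ℝ) : f t = f 0 * exp (c * t) := by
  have hderiv : ∀ s : ℝ, HasDerivAt (fun s : ℝ => f s * exp (-(c * s))) 0 s := by
    intro s
    have he : HasDerivAt (fun s : ℝ => exp (-(c * s))) (exp (-(c * s)) * -c) s := by
      simpa using (((hasDerivAt_id (s : ℂ)).const_mul c).neg.cexp).comp_ofReal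
    exact ((hf s).mul he).congr_deriv (by ring)
  have hconst := is_const_of_deriv_eq_zero (fun s => (hderiv s).differentiableAt)
    (fun s => (hderiv s).deriv) t 0
  simp only [ofReal_zero, mul_zero, neg_zero, exp_zero, mul_one] at hconst
  rw [← hconst, mul_assoc, ← exp_add, neg_add_cancel, exp_zero, mul_one]

theorem norm_eq_of_hasDerivAt_ofReal_mul_I {f : ℝ → ℂ} {r : ℝ → ℝ}
    (hf : ∀ t, HasDerivAt f (r t * I * f t) t) (t : ℝ) : ‖f t‖ = ‖f 0‖ := by
  have hderiv : ∀ s, HasDerivAt (‖f ·‖ ^ 2) 0 s := by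
    intro s
    convert (hf s).norm_sq using 1
    rw [Complex.inner, mul_assoc, mul_conj]
    simp
  have hconst := is_const_of_deriv_eq_zero (fun s => (hderiv s).differentiableAt)
    (fun s => (hderiv s).deriv) t 0
  exact (pow_left_inj₀ (norm_nonneg _) (norm_nonneg _) two_ne_zero).mp hconst

theorem two_pi_le_abs_of_exp_ofReal_mul_I_eq_one {θ : ℝ} (hθ : θ ≠ 0)
    (h : exp (θ * I) = 1) : 2 * π ≤ |θ| := by
  obtain ⟨n, hn⟩ := exp_eq_one_iff.mp h
  have hθn : θ = n * (2 * π) := by simpa using congrArg im hn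
  have hn0 : n ≠ 0 := by
    rintro rfl
    exact hθ (by simpa using hθn)
  have hn : (1 : ℝ) ≤ |(n : ℝ)| := by exact_mod_cast Int.one_le_abs hn0
  rw [hθn, abs_mul, abs_of_pos Real.two_pi_pos]
  exact le_mul_of_one_le_left Real.two_pi_pos.le hn

theorem periodic_exp_ofReal_mul_mul_I {ω : ℝ} (hω : ω ≠ 0) :
    Function.Periodic (fun t : ℝ => exp (↑(ω * t) * I)) (2 * π / ω) := by
  intro t
  dsimp only
  rw [show (↑(ω * (t + 2 * π / ω)) * I : ℂ) = ↑(ω * t) * I + 2 * π * I by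
    rw [mul_add, mul_div_cancel₀ _ hω]; push_cast; ring]
  exact exp_periodic _

theorem mul_exp_ofReal_mul_neg_arg_div_mul_I_eq_norm (a : ℂ) {ω : ℝ} (hω : ω ≠ 0) :
    a * exp (↑(ω * (-arg a / ω)) * I) = ‖a‖ := by
  rw [mul_div_cancel₀ _ hω, ofReal_neg, neg_mul, exp_neg]
  conv_lhs => enter [1]; rw [← norm_mul_exp_arg_mul_I a]
  rw [mul_assoc, mul_inv_cancel₀ (exp_ne_zero _), mul_one]

namespace IsHSol

variable {z₁ z₂ : ℝ → ℂ}

theorem hasDerivAt_fst (h : IsHSol z₁ z₂) (t : ℝ) :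
    HasDerivAt z₁ (((-2 : ℝ) : ℂ) * I * z₁ t) t :=
  (h t).1.congr_deriv (by apply Complex.ext <;> simp)

theorem hasDerivAt_snd (h : IsHSol z₁ z₂) (t : ℝ) :
    HasDerivAt z₂ (((-(4 * ‖z₂ t‖ ^ 2) : ℝ) : ℂ) * I * z₂ t) t :=
  (h t).2.congr_deriv (by apply Complex.ext <;> simp; ring)

theorem norm_fst (h : IsHSol z₁ z₂) (t : ℝ) : ‖z₁ t‖ = ‖z₁ 0‖ :=
  norm_eq_of_hasDerivAt_ofReal_mul_I h.hasDerivAt_fst t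

theorem norm_snd (h : IsHSol z₁ z₂) (t : ℝ) : ‖z₂ t‖ = ‖z₂ 0‖ :=
  norm_eq_of_hasDerivAt_ofReal_mul_I h.hasDerivAt_snd t

theorem fst_eq (h : IsHSol z₁ z₂) (t : ℝ) : z₁ t = z₁ 0 * exp (((-2 * t : ℝ) : ℂ) * I) := by
  rw [eq_mul_exp_of_hasDerivAt h.hasDerivAt_fst t, ofReal_mul, mul_right_comm]

-- Since `|z₂|` is a first integral, `z₂` solves a linear equation with constant coefficient.
theorem snd_eq (h : IsHSol z₁ z₂) (t : ℝ) :
    z₂ t = z₂ 0 * exp (((-(4 * ‖z₂ 0‖ ^ 2) * t : ℝ) : ℂ) * I) := by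
  have hlin (s : ℝ) : HasDerivAt z₂ (((-(4 * ‖z₂ 0‖ ^ 2) : ℝ) : ℂ) * I * z₂ s) s := by
    simpa only [h.norm_snd s] using h.hasDerivAt_snd s
  rw [eq_mul_exp_of_hasDerivAt hlin t, ofReal_mul, mul_right_comm]

theorem periodic_fst (h : IsHSol z₁ z₂) : Function.Periodic z₁ π := by
  have hper := (periodic_exp_ofReal_mul_mul_I (ω := -2) (by norm_num)).neg
  rw [show -(2 * π / -2) = π by ring] at hper
  intro t
  rw [h.fst_eq (t + π), h.fst_eq t]
  exact congrArg (z₁ 0 * ·) (hper t)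

theorem pi_le_of_fst_eq (h : IsHSol z₁ z₂) (hz : z₁ 0 ≠ 0) {T : ℝ} (hT : 0 < T)
    (hper : z₁ T = z₁ 0) : π ≤ T := by
  have hexp : exp (↑(-2 * T) * I) = 1 :=
    mul_left_cancel₀ hz (by rw [mul_one, ← h.fst_eq, hper])
  have h2pi := two_pi_le_abs_of_exp_ofReal_mul_I_eq_one (by positivity) hexp
  rw [abs_of_neg (by linarith)] at h2pi
  linarith

theorem periodic_snd (h : IsHSol z₁ z₂) (hz : z₂ 0 ≠ 0) :
    Function.Periodic z₂ (π / (2 * ‖z₂ 0‖ ^ 2)) := by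
  have hper := (periodic_exp_ofReal_mul_mul_I (ω := -(4 * ‖z₂ 0‖ ^ 2)) (by simpa using hz)).neg
  rw [show -(2 * π / -(4 * ‖z₂ 0‖ ^ 2)) = π / (2 * ‖z₂ 0‖ ^ 2) by field_simp; ring] at hper
  intro t
  rw [h.snd_eq (t + _), h.snd_eq t]
  exact congrArg (z₂ 0 * ·) (hper t)

theorem snd_arg_div_eq_norm (h : IsHSol z₁ z₂) (hz : z₂ 0 ≠ 0) :
    z₂ (arg (z₂ 0) / (4 * ‖z₂ 0‖ ^ 2)) = ‖z₂ 0‖ := by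
  rw [← neg_div_neg_eq, h.snd_eq]
  exact mul_exp_ofReal_mul_neg_arg_div_mul_I_eq_norm _ (by simpa using hz)

end IsHSol

/-- For `H(z₁,z₂) = |z₁|² + |z₂|⁴`: the circle `P₁` is contained in `H⁻¹(1)`, is invariant
under the flow of `X_H`, and carries periodic orbits of minimal period `π`; moreover every
solution in `H⁻¹(1)` with `z₂(0) ≠ 0` hits `{Im z₂ = 0, Re z₂ > 0}` (the interior of the
disk `Σ₁`) in forward and in backward time from any `t₀`. -/
theorem stmt_16 :
    (∀ p ∈ P₁, ‖p.1‖ ^ 2 + ‖p.2‖ ^ 4 = 1) ∧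
    (∀ z₁ z₂ : ℝ → ℂ, IsHSol z₁ z₂ → (z₁ 0, z₂ 0) ∈ P₁ →
      (∀ t : ℝ, (z₁ t, z₂ t) ∈ P₁) ∧
      (∀ t : ℝ, z₁ (t + Real.pi) = z₁ t ∧ z₂ (t + Real.pi) = z₂ t) ∧
      (∀ T : ℝ, 0 < T → (∀ t : ℝ, z₁ (t + T) = z₁ t ∧ z₂ (t + T) = z₂ t) →
        Real.pi ≤ T)) ∧
    (∀ z₁ z₂ : ℝ → ℂ, IsHSol z₁ z₂ →
      ‖z₁ 0‖ ^ 2 + ‖z₂ 0‖ ^ 4 = 1 → z₂ 0 ≠ 0 →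
      ∀ t₀ : ℝ,
        (∃ tp : ℝ, t₀ < tp ∧ (z₂ tp).im = 0 ∧ 0 < (z₂ tp).re) ∧
        (∃ tm : ℝ, tm < t₀ ∧ (z₂ tm).im = 0 ∧ 0 < (z₂ tm).re)) := by
  refine ⟨fun p ⟨h₁, h₂⟩ => by simp [h₁, h₂], ?_, ?_⟩
  · rintro z₁ z₂ h ⟨h₁ : ‖z₁ 0‖ = 1, h₂ : z₂ 0 = 0⟩
    have hz₂ (t : ℝ) : z₂ t = 0 := by rw [h.snd_eq, h₂, zero_mul]
    have hz₁ : z₁ 0 ≠ 0 := norm_ne_zero_iff.mp (h₁.trans_ne one_ne_zero)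
    exact ⟨fun t => ⟨(h.norm_fst t).trans h₁, hz₂ t⟩,
      fun t => ⟨h.periodic_fst t, by rw [hz₂, hz₂]⟩,
      fun T hT hper => h.pi_le_of_fst_eq hz₁ hT (by simpa using (hper 0).1)⟩
  · intro z₁ z₂ h _ hz₂ t₀
    set T := π / (2 * ‖z₂ 0‖ ^ 2)
    have hT : 0 < T := by positivity
    obtain ⟨tp, ⟨htp, -⟩, hp⟩ := (h.periodic_snd hz₂).exists_mem_Ioc hT _ t₀
    obtain ⟨tm, ⟨-, htm⟩, hm⟩ := (h.periodic_snd hz₂).exists_mem_Ico hT _ (t₀ - T)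
    rw [h.snd_arg_div_eq_norm hz₂] at hp hm
    refine ⟨⟨tp, htp, ?_⟩, ⟨tm, by linarith, ?_⟩⟩ <;>
      simp [← hp, ← hm, hz₂]
end
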